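/- Let Q ⊆ P be prime ideals of a commutative ring R and let R_P be the localization of R at P. If the extension Q_P of Q in R_P is weakly annihilated, then Q is a weakly annihilated ideal of R. -/

import Mathlib

/-- An ideal `I` of a commutative ring is weakly annihilated if for each `a ∈ I` and
`b ∉ I` there exists `c` with `c * a = 0` but `c * b ≠ 0`. -/
def WeaklyAnnihilated {R : Type*} [CommRing R] (I : Ideal R) : Prop :=
  ∀ a ∈ I, ∀ b ∉ I, ∃ c : R, c * a = 0 ∧ c * b ≠ 0

/-!
Pull the separating element back from the localization: write `c = r / s`. Then `r * a`
vanishes in the localization, so some `u` outside `P` kills it in `R`, and `u * r` separates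
`a` from `b` because `u` and `s` become units. Since `Q` is a prime ideal disjoint from the
complement of `P`, it is the contraction of `Q_P`.
-/

namespace IsLocalization

variable {R : Type*} [CommRing R] {S : Type*} [CommRing S] [Algebra R S]

theorem exists_mul_eq_zero_and_mul_ne_zero (M : Submonoid R) [IsLocalization M S]
    {a b : R} {c : S} (ha : c * algebraMap R S a = 0)
    (hb : c * algebraMap R S b ≠ 0) :
    ∃ d : R, d * a = 0 ∧ d * b ≠ 0 := by
  set φ := algebraMap R S
  obtain ⟨⟨r, s⟩, hrs : c * φ s = φ r⟩ := surj M c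
  have hra : φ (r * a) = 0 := by rw [map_mul, ← hrs, mul_right_comm, ha, zero_mul]
  obtain ⟨u, hu⟩ := (map_eq_zero_iff M S _).mp hra
  refine ⟨u * r, by rw [mul_assoc, hu], fun hurb => hb ?_⟩
  have hzero : φ u * φ s * (c * φ b) = 0 := by
    have := congrArg φ hurb
    rw [map_mul, map_mul, ← hrs, map_zero] at this
    linear_combination this
  exact ((map_units S u).mul (map_units S s)).mul_right_eq_zero.mp hzero

theorem weaklyAnnihilated_comap (M : Submonoid R) [IsLocalization M S] {J : Ideal S}
    (hJ : WeaklyAnnihilated J) :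
    WeaklyAnnihilated (J.comap (algebraMap R S)) := fun _ ha _ hb =>
  let ⟨_, hca, hcb⟩ := hJ _ ha _ hb
  exists_mul_eq_zero_and_mul_ne_zero M hca hcb

end IsLocalization

theorem stmt5 {R : Type*} [CommRing R] (Q P : Ideal R) [Q.IsPrime] [P.IsPrime]
    (hQP : Q ≤ P)
    (h : WeaklyAnnihilated (Q.map (algebraMap R (Localization.AtPrime P)))) :
    WeaklyAnnihilated Q := by
  have hdisj : Disjoint (P.primeCompl : Set R) Q :=
    Set.disjoint_compl_left_iff_subset.mpr hQP
  rw [← IsLocalization.under_map_of_isPrime_disjoint P.primeCompl (Localization.AtPrime P)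
    ‹Q.IsPrime› hdisj]
  exact IsLocalization.weaklyAnnihilated_comap P.primeCompl h
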